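/- Let T > 0 and t ∈ [0,T). Let (F_s)_{s∈[0,T]} be a filtration on a probability space (Ω, 𝓕, P), let M, N : [0,T] → Ω → ℝ be F-martingales with each M_s and N_s square-integrable, and let Σ : [0,T] × Ω → ℝ be jointly measurable, uniformly bounded, with s ↦ Σ_s(ω) continuous on [0,T] for P-a.e. ω, and such that s ↦ M_s N_s − ∫₀^s Σ_r dr is also an F-martingale. Then for every sub-σ-algebra G ⊆ F_t, the cross increment estimator converges in L¹: E[ | (1/Δ) E[(M_{t+Δ} − M_t)(N_{t+Δ} − N_t) | G] − E[Σ_t | G] | ] → 0 as Δ → 0⁺ (Δ ranging over (0, T − t]). -/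

import Mathlib

open MeasureTheory Filter Set Topology

/-!
Since `M`, `N` and `M N - ∫ Σ` are martingales, the cross increment
`(M_{t+Δ} - M_t) (N_{t+Δ} - N_t)` has the same `F_t`-conditional expectation as `∫_t^{t+Δ} Σ_r dr`,
hence by the tower property the same `G`-conditional expectation. Conditional expectation is an
`L¹` contraction, so the error is at most `E |Δ⁻¹ ∫_t^{t+Δ} Σ_r dr - Σ_t|`, which tends to `0` by
the fundamental theorem of calculus along almost every path and dominated convergence with the
bound `2 C`.
-/

section CondExp

variable {Ω : Type*} {m m0 : MeasurableSpace Ω} {P : Measure Ω}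

lemma condExp_sub_eq_zero {f g : Ω → ℝ} (hm : m ≤ m0) [SigmaFinite (P.trim hm)]
    (hf : Integrable f P) (hg_meas : StronglyMeasurable[m] g) (hg : Integrable g P)
    (hfg : P[f|m] =ᵐ[P] g) : P[f - g|m] =ᵐ[P] 0 := by
  refine (condExp_sub hf hg m).trans ?_
  rw [condExp_of_stronglyMeasurable hm hg_meas hg]
  filter_upwards [hfg] with ω hω
  simp [hω]

lemma condExp_mul_sub_eq_zero {f g Z : Ω → ℝ} (hm : m ≤ m0) [SigmaFinite (P.trim hm)]
    (hf : Integrable f P) (hg_meas : StronglyMeasurable[m] g) (hg : Integrable g P)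
    (hfg : P[f|m] =ᵐ[P] g) (hZ : StronglyMeasurable[m] Z) (hZfg : Integrable (Z * (f - g)) P) :
    P[Z * (f - g)|m] =ᵐ[P] 0 := by
  refine (condExp_mul_of_stronglyMeasurable_left hZ hZfg (hf.sub hg)).trans ?_
  filter_upwards [condExp_sub_eq_zero hm hf hg_meas hg hfg] with ω hω
  simp [hω]

lemma integrable_sub_of_integrable_mul_sub {Mu Ms Nu Ns Au As : Ω → ℝ}
    (hMu : MemLp Mu 2 P) (hMs : MemLp Ms 2 P) (hNu : MemLp Nu 2 P) (hNs : MemLp Ns 2 P)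
    (hXu : Integrable (Mu * Nu - Au) P) (hXs : Integrable (Ms * Ns - As) P) :
    Integrable (Au - As) P := by
  convert ((hMu.integrable_mul hNu).sub (hMs.integrable_mul hNs)).sub (hXu.sub hXs) using 1
  ring

theorem condExp_mul_increment_eq [IsFiniteMeasure P] {Mu Ms Nu Ns Au As : Ω → ℝ}
    (hm : m ≤ m0) [SigmaFinite (P.trim hm)]
    (hMs_meas : StronglyMeasurable[m] Ms) (hNs_meas : StronglyMeasurable[m] Ns)
    (hXs_meas : StronglyMeasurable[m] (Ms * Ns - As))
    (hMu : MemLp Mu 2 P) (hMs : MemLp Ms 2 P) (hNu : MemLp Nu 2 P) (hNs : MemLp Ns 2 P)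
    (hXu : Integrable (Mu * Nu - Au) P) (hXs : Integrable (Ms * Ns - As) P)
    (hM : P[Mu|m] =ᵐ[P] Ms) (hN : P[Nu|m] =ᵐ[P] Ns) (hX : P[Mu * Nu - Au|m] =ᵐ[P] Ms * Ns - As) :
    P[(Mu - Ms) * (Nu - Ns)|m] =ᵐ[P] P[Au - As|m] := by
  have hprod : Integrable ((Mu - Ms) * (Nu - Ns)) P := (hMu.sub hMs).integrable_mul (hNu.sub hNs)
  have hA := integrable_sub_of_integrable_mul_sub hMu hMs hNu hNs hXu hXs
  -- two martingale increments with `m`-measurable factors, plus the increment of `M N - A`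
  have hdecomp : (Mu - Ms) * (Nu - Ns) - (Au - As)
      = ((Mu * Nu - Au) - (Ms * Ns - As)) - Ms * (Nu - Ns) - Ns * (Mu - Ms) := by ring
  have hMNs : Integrable (Ms * (Nu - Ns)) P := hMs.integrable_mul (hNu.sub hNs)
  have hNMs : Integrable (Ns * (Mu - Ms)) P := hNs.integrable_mul (hMu.sub hMs)
  have hX0 := condExp_sub_eq_zero hm hXu hXs_meas hXs hX
  have hN0 := condExp_mul_sub_eq_zero hm (hNu.integrable one_le_two) hNs_meas
    (hNs.integrable one_le_two) hN hMs_meas hMNs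
  have hM0 := condExp_mul_sub_eq_zero hm (hMu.integrable one_le_two) hMs_meas
    (hMs.integrable one_le_two) hM hNs_meas hNMs
  have h0 : P[(Mu - Ms) * (Nu - Ns) - (Au - As)|m] =ᵐ[P] 0 := by
    rw [hdecomp]
    filter_upwards [condExp_sub ((hXu.sub hXs).sub hMNs) hNMs m,
      condExp_sub (hXu.sub hXs) hMNs m, hX0, hN0, hM0] with ω h1 h2 h3 h4 h5
    simp_all
  filter_upwards [condExp_sub hprod hA m, h0] with ω h1 h2
  simp only [Pi.sub_apply, Pi.zero_apply] at h1 h2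
  linarith

lemma condExp_congr_of_le {m₁ m₂ : MeasurableSpace Ω} {f g : Ω → ℝ} (hm₁₂ : m₁ ≤ m₂)
    (hm₂ : m₂ ≤ m0) [SigmaFinite (P.trim hm₂)] (h : P[f|m₂] =ᵐ[P] P[g|m₂]) :
    P[f|m₁] =ᵐ[P] P[g|m₁] :=
  (condExp_condExp_of_le hm₁₂ hm₂).symm.trans
    ((condExp_congr_ae h).trans (condExp_condExp_of_le hm₁₂ hm₂))

lemma integral_abs_mul_condExp_sub_condExp_le {f g : Ω → ℝ} (c : ℝ) (hf : Integrable f P)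
    (hg : Integrable g P) :
    ∫ ω, |c * P[f|m] ω - P[g|m] ω| ∂P ≤ ∫ ω, |c * f ω - g ω| ∂P :=
  calc ∫ ω, |c * P[f|m] ω - P[g|m] ω| ∂P = ∫ ω, |P[c • f - g|m] ω| ∂P := by
        refine integral_congr_ae ?_
        filter_upwards [condExp_sub (hf.smul c) hg m, condExp_smul c f m] with ω h1 h2
        simp [h1, h2]
    _ ≤ ∫ ω, |c * f ω - g ω| ∂P := integral_abs_condExp_le _

theorem integral_abs_mul_condExp_cross_increment_sub_le [IsFiniteMeasure P]
    {G : MeasurableSpace Ω} {Mu Ms Nu Ns Au As g : Ω → ℝ} (hG : G ≤ m) (hm : m ≤ m0)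
    [SigmaFinite (P.trim hm)]
    (hMs_meas : StronglyMeasurable[m] Ms) (hNs_meas : StronglyMeasurable[m] Ns)
    (hXs_meas : StronglyMeasurable[m] (Ms * Ns - As))
    (hMu : MemLp Mu 2 P) (hMs : MemLp Ms 2 P) (hNu : MemLp Nu 2 P) (hNs : MemLp Ns 2 P)
    (hXu : Integrable (Mu * Nu - Au) P) (hXs : Integrable (Ms * Ns - As) P)
    (hM : P[Mu|m] =ᵐ[P] Ms) (hN : P[Nu|m] =ᵐ[P] Ns) (hX : P[Mu * Nu - Au|m] =ᵐ[P] Ms * Ns - As)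
    (hg : Integrable g P) (c : ℝ) :
    ∫ ω, |c * P[(Mu - Ms) * (Nu - Ns)|G] ω - P[g|G] ω| ∂P ≤ ∫ ω, |c * (Au - As) ω - g ω| ∂P := by
  have hcross := condExp_congr_of_le hG hm <| condExp_mul_increment_eq hm hMs_meas hNs_meas
    hXs_meas hMu hMs hNu hNs hXu hXs hM hN hX
  calc _ = ∫ ω, |c * P[Au - As|G] ω - P[g|G] ω| ∂P := by
        refine integral_congr_ae ?_
        filter_upwards [hcross] with ω hω
        rw [hω]
    _ ≤ _ := integral_abs_mul_condExp_sub_condExp_le c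
        (integrable_sub_of_integrable_mul_sub hMu hMs hNu hNs hXu hXs) hg

end CondExp

lemma tendsto_inv_mul_intervalIntegral_sub {g : ℝ → ℝ} {t : ℝ}
    (hmeas : StronglyMeasurableAtFilter g (𝓝[>] t)) (hcont : ContinuousWithinAt g (Ioi t) t) :
    Tendsto (fun Δ => Δ⁻¹ * (∫ r in t..t + Δ, g r) - g t) (𝓝[>] 0) (𝓝 0) := by
  have hderiv : HasDerivWithinAt (fun u => ∫ r in t..u, g r) (g t) (Ioi t) t :=
    (intervalIntegral.integral_hasDerivWithinAt_right (IntervalIntegrable.refl) hmeas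
      hcont).Ioi_of_Ici
  have hslope := (hasDerivWithinAt_iff_tendsto_slope' (lt_irrefl t)).1 hderiv
  have hshift : Tendsto (fun Δ => t + Δ) (𝓝[>] 0) (𝓝[>] t) := by
    refine tendsto_nhdsWithin_iff.2 ⟨?_, ?_⟩
    · simpa using (continuous_const_add t).continuousWithinAt.tendsto (s := Ioi 0) (x := 0)
    · filter_upwards [self_mem_nhdsWithin] with Δ hΔ
      simpa using hΔ
  simpa [slope] using (hslope.comp hshift).sub_const (g t)

lemma stronglyMeasurable_intervalIntegral {Ω : Type*} {mΩ : MeasurableSpace Ω} {f : ℝ → Ω → ℝ}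
    (hf : Measurable (Function.uncurry f)) (a b : ℝ) :
    StronglyMeasurable (fun ω => ∫ r in a..b, f r ω) := by
  have hswap : StronglyMeasurable (Function.uncurry fun ω r => f r ω) :=
    (hf.comp measurable_swap).stronglyMeasurable
  exact (hswap.integral_prod_right (ν := volume.restrict (Ioc a b))).sub
    (hswap.integral_prod_right (ν := volume.restrict (Ioc b a)))

lemma intervalIntegrable_of_abs_le {g : ℝ → ℝ} {a b C : ℝ} (hg : Measurable g)
    (hC : ∀ s ∈ uIcc a b, |g s| ≤ C) : IntervalIntegrable g volume a b :=
  intervalIntegrable_const.mono_fun' hg.aestronglyMeasurable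
    (ae_restrict_of_forall_mem measurableSet_uIoc fun s hs => hC s (uIoc_subset_uIcc hs))

lemma integral_interval_sub_left_of_abs_le {g : ℝ → ℝ} {a b s u C : ℝ} (hg : Measurable g)
    (hC : ∀ r ∈ Icc a b, |g r| ≤ C) (hs : s ∈ Icc a b) (hu : u ∈ Icc a b) :
    (∫ r in a..u, g r) - ∫ r in a..s, g r = ∫ r in s..u, g r := by
  have ha : a ∈ Icc a b := left_mem_Icc.2 (hs.1.trans hs.2)
  exact intervalIntegral.integral_interval_sub_left
    (intervalIntegrable_of_abs_le hg fun r hr => hC r (uIcc_subset_Icc ha hu hr))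
    (intervalIntegrable_of_abs_le hg fun r hr => hC r (uIcc_subset_Icc ha hs hr))

theorem tendsto_integral_abs_inv_mul_intervalIntegral_sub {Ω : Type*} {mΩ : MeasurableSpace Ω}
    {P : Measure Ω} [IsFiniteMeasure P] {f : ℝ → Ω → ℝ} {t T C : ℝ} (htT : t < T)
    (hf : Measurable (Function.uncurry f)) (hC : ∀ s ∈ Icc t T, ∀ ω, |f s ω| ≤ C)
    (hcont : ∀ᵐ ω ∂P, ContinuousWithinAt (f · ω) (Ioi t) t) :
    Tendsto (fun Δ => ∫ ω, |Δ⁻¹ * (∫ r in t..t + Δ, f r ω) - f t ω| ∂P) (𝓝[>] 0) (𝓝 0) := by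
  have hf_time (ω : Ω) : Measurable (f · ω) := hf.comp (measurable_id.prodMk measurable_const)
  have hf_space (s : ℝ) : Measurable (f s) := hf.comp (measurable_const.prodMk measurable_id)
  have hbound : ∀ᶠ Δ in 𝓝[>] (0 : ℝ), ∀ᵐ ω ∂P,
      ‖|Δ⁻¹ * (∫ r in t..t + Δ, f r ω) - f t ω|‖ ≤ 2 * C := by
    filter_upwards [Ioo_mem_nhdsGT (sub_pos.2 htT)] with Δ ⟨hΔ, hΔT⟩
    refine ae_of_all _ fun ω => ?_
    have hint : ‖∫ r in t..t + Δ, f r ω‖ ≤ C * |t + Δ - t| := by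
      refine intervalIntegral.norm_integral_le_of_norm_le_const fun s hs => ?_
      rw [uIoc_of_le (by linarith)] at hs
      exact hC s ⟨hs.1.le, by linarith [hs.2]⟩ ω
    rw [add_sub_cancel_left, abs_of_pos hΔ, Real.norm_eq_abs] at hint
    have hft := hC t ⟨le_rfl, htT.le⟩ ω
    calc ‖|Δ⁻¹ * (∫ r in t..t + Δ, f r ω) - f t ω|‖
        ≤ Δ⁻¹ * |∫ r in t..t + Δ, f r ω| + |f t ω| := by
          rw [norm_abs_eq_norm, Real.norm_eq_abs]
          refine (abs_sub _ _).trans ?_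
          rw [abs_mul, abs_inv, abs_of_pos hΔ]
      _ ≤ Δ⁻¹ * (C * Δ) + C := by gcongr
      _ = 2 * C := by field_simp; ring
  have hlim := tendsto_integral_filter_of_dominated_convergence (μ := P) (f := fun _ => 0)
    (fun _ => 2 * C) ?_ hbound (integrable_const _) ?_
  · simpa using hlim
  · refine Eventually.of_forall fun Δ => ?_
    exact (((stronglyMeasurable_intervalIntegral hf t (t + Δ)).measurable.const_mul
      Δ⁻¹).sub (hf_space t)).abs.aestronglyMeasurable
  · filter_upwards [hcont] with ω hω
    simpa using (tendsto_inv_mul_intervalIntegral_sub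
      (hf_time ω).stronglyMeasurable.stronglyMeasurableAtFilter hω).abs

theorem statement6_general
    {Ω : Type*} {m0 : MeasurableSpace Ω} {P : Measure Ω} [IsProbabilityMeasure P]
    {T t : ℝ}
    (ht : t ∈ Ico (0 : ℝ) T)
    (F : Filtration ℝ m0)
    (M N : ℝ → Ω → ℝ)
    (hM_adapted : ∀ s ∈ Icc (0 : ℝ) T, StronglyMeasurable[F s] (M s))
    (hM_sq : ∀ s ∈ Icc (0 : ℝ) T, MemLp (M s) 2 P)
    (hM_mart : ∀ s ∈ Icc (0 : ℝ) T, ∀ u ∈ Icc (0 : ℝ) T, s ≤ u →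
      P[M u|F s] =ᵐ[P] M s)
    (hN_adapted : ∀ s ∈ Icc (0 : ℝ) T, StronglyMeasurable[F s] (N s))
    (hN_sq : ∀ s ∈ Icc (0 : ℝ) T, MemLp (N s) 2 P)
    (hN_mart : ∀ s ∈ Icc (0 : ℝ) T, ∀ u ∈ Icc (0 : ℝ) T, s ≤ u →
      P[N u|F s] =ᵐ[P] N s)
    (Sig : ℝ → Ω → ℝ)
    (hSig_meas : Measurable (Function.uncurry Sig))
    (C : ℝ) (hSig_bdd : ∀ s ∈ Icc (0 : ℝ) T, ∀ ω, |Sig s ω| ≤ C)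
    (hSig_cont : ∀ᵐ ω ∂P, ContinuousOn (fun s => Sig s ω) (Icc (0 : ℝ) T))
    (hMN_adapted : ∀ s ∈ Icc (0 : ℝ) T,
      StronglyMeasurable[F s] (fun ω => M s ω * N s ω - ∫ r in (0 : ℝ)..s, Sig r ω))
    (hMN_int : ∀ s ∈ Icc (0 : ℝ) T,
      Integrable (fun ω => M s ω * N s ω - ∫ r in (0 : ℝ)..s, Sig r ω) P)
    (hMN_mart : ∀ s ∈ Icc (0 : ℝ) T, ∀ u ∈ Icc (0 : ℝ) T, s ≤ u →
      P[fun ω => M u ω * N u ω - ∫ r in (0 : ℝ)..u, Sig r ω|F s]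
        =ᵐ[P] fun ω => M s ω * N s ω - ∫ r in (0 : ℝ)..s, Sig r ω)
    (G : MeasurableSpace Ω) (hG : G ≤ F t) :
    Tendsto (fun Δ : ℝ =>
        ∫ ω, |(1 / Δ) * (P[fun ω' => (M (t + Δ) ω' - M t ω') * (N (t + Δ) ω' - N t ω')|G]) ω
          - (P[Sig t|G]) ω| ∂P)
      (𝓝[Ioc (0 : ℝ) (T - t)] 0) (𝓝 0) := by
  obtain ⟨ht0, htT⟩ := ht
  have htI : t ∈ Icc 0 T := ⟨ht0, htT.le⟩
  have hSig_int : Integrable (Sig t) P :=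
    .of_bound (hSig_meas.comp (measurable_const.prodMk measurable_id)).aestronglyMeasurable C
      (ae_of_all _ (hSig_bdd t htI))
  have hincr (u : ℝ) (hu : u ∈ Icc 0 T) (ω : Ω) :
      (∫ r in (0 : ℝ)..u, Sig r ω) - ∫ r in (0 : ℝ)..t, Sig r ω = ∫ r in t..u, Sig r ω :=
    integral_interval_sub_left_of_abs_le (hSig_meas.comp (measurable_id.prodMk measurable_const))
      (fun r hr => hSig_bdd r hr ω) htI hu
  have hbound : ∀ Δ ∈ Ioc 0 (T - t),
      ∫ ω, |(1 / Δ) * (P[fun ω' => (M (t + Δ) ω' - M t ω') * (N (t + Δ) ω' - N t ω')|G]) ω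
          - (P[Sig t|G]) ω| ∂P
        ≤ ∫ ω, |Δ⁻¹ * (∫ r in t..t + Δ, Sig r ω) - Sig t ω| ∂P := by
    rintro Δ ⟨hΔ, hΔT⟩
    have huI : t + Δ ∈ Icc (0 : ℝ) T := ⟨by linarith, by linarith⟩
    have h := integral_abs_mul_condExp_cross_increment_sub_le hG (F.le t)
      (hM_adapted t htI) (hN_adapted t htI) (hMN_adapted t htI)
      (hM_sq _ huI) (hM_sq t htI) (hN_sq _ huI) (hN_sq t htI) (hMN_int _ huI) (hMN_int t htI)
      (hM_mart t htI _ huI (by linarith)) (hN_mart t htI _ huI (by linarith))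
      (hMN_mart t htI _ huI (by linarith)) hSig_int Δ⁻¹
    simp only [Pi.sub_apply, hincr _ huI] at h
    rwa [one_div]
  have hSig_cont_t : ∀ᵐ ω ∂P, ContinuousWithinAt (Sig · ω) (Ioi t) t := by
    filter_upwards [hSig_cont] with ω hω
    exact (hω t htI).mono_of_mem_nhdsWithin <| mem_of_superset (Ioo_mem_nhdsGT htT)
      fun s hs => ⟨ht0.trans hs.1.le, hs.2.le⟩
  refine squeeze_zero' (Eventually.of_forall fun Δ => integral_nonneg fun ω => abs_nonneg _)
    (eventually_nhdsWithin_of_forall hbound) ?_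
  exact (tendsto_integral_abs_inv_mul_intervalIntegral_sub htT hSig_meas
    (fun s hs => hSig_bdd s ⟨ht0.trans hs.1, hs.2⟩) hSig_cont_t).mono_left
    (nhdsWithin_mono _ Ioc_subset_Ioi_self)

/-- For square-integrable real `F`-martingales `M, N` whose product is
compensated by `∫ Σ` (`Σ` jointly measurable, bounded, a.s. time-continuous), for every
sub-σ-algebra `G ⊆ F t` the cross increment estimator converges in L¹:
`E[ | (1/Δ) E[(M_{t+Δ} − M_t)(N_{t+Δ} − N_t) | G] − E[Σ_t | G] | ] → 0` as `Δ → 0⁺`. -/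
theorem statement6
    {Ω : Type*} {m0 : MeasurableSpace Ω} {P : Measure Ω} [IsProbabilityMeasure P]
    {T t : ℝ}
    (hT : 0 < T) (ht : t ∈ Ico (0 : ℝ) T)
    (F : Filtration ℝ m0)
    (M N : ℝ → Ω → ℝ)
    (hM_adapted : ∀ s ∈ Icc (0 : ℝ) T, StronglyMeasurable[F s] (M s))
    (hM_sq : ∀ s ∈ Icc (0 : ℝ) T, MemLp (M s) 2 P)
    (hM_mart : ∀ s ∈ Icc (0 : ℝ) T, ∀ u ∈ Icc (0 : ℝ) T, s ≤ u →
      P[M u|F s] =ᵐ[P] M s)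
    (hN_adapted : ∀ s ∈ Icc (0 : ℝ) T, StronglyMeasurable[F s] (N s))
    (hN_sq : ∀ s ∈ Icc (0 : ℝ) T, MemLp (N s) 2 P)
    (hN_mart : ∀ s ∈ Icc (0 : ℝ) T, ∀ u ∈ Icc (0 : ℝ) T, s ≤ u →
      P[N u|F s] =ᵐ[P] N s)
    (Sig : ℝ → Ω → ℝ)
    (hSig_meas : Measurable (Function.uncurry Sig))
    (C : ℝ) (hSig_bdd : ∀ s ∈ Icc (0 : ℝ) T, ∀ ω, |Sig s ω| ≤ C)
    (hSig_cont : ∀ᵐ ω ∂P, ContinuousOn (fun s => Sig s ω) (Icc (0 : ℝ) T))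
    (hMN_adapted : ∀ s ∈ Icc (0 : ℝ) T,
      StronglyMeasurable[F s] (fun ω => M s ω * N s ω - ∫ r in (0 : ℝ)..s, Sig r ω))
    (hMN_int : ∀ s ∈ Icc (0 : ℝ) T,
      Integrable (fun ω => M s ω * N s ω - ∫ r in (0 : ℝ)..s, Sig r ω) P)
    (hMN_mart : ∀ s ∈ Icc (0 : ℝ) T, ∀ u ∈ Icc (0 : ℝ) T, s ≤ u →
      P[fun ω => M u ω * N u ω - ∫ r in (0 : ℝ)..u, Sig r ω|F s]
        =ᵐ[P] fun ω => M s ω * N s ω - ∫ r in (0 : ℝ)..s, Sig r ω)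
    (G : MeasurableSpace Ω) (hG : G ≤ F t) :
    Tendsto (fun Δ : ℝ =>
        ∫ ω, |(1 / Δ) * (P[fun ω' => (M (t + Δ) ω' - M t ω') * (N (t + Δ) ω' - N t ω')|G]) ω
          - (P[Sig t|G]) ω| ∂P)
      (𝓝[Ioc (0 : ℝ) (T - t)] 0) (𝓝 0) :=
  statement6_general ht F M N hM_adapted hM_sq hM_mart hN_adapted hN_sq hN_mart Sig hSig_meas C
    hSig_bdd hSig_cont hMN_adapted hMN_int hMN_mart G hG
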